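/- The value φ^α defined by φ^α_i(v) = (1/|N|!) Σ_{π∈Ω(N)} Σ_{P∈𝒫} pr^α_π(P)·[v(C_i^π ∪ {i}, P_{[C_i^π∪{i}]}) − v(C_i^π, P_{[C_i^π]})] satisfies Efficiency: Σ_{i∈N} φ^α_i(v) = v(N, {N}) for every partition-function game v. -/

import Mathlib

open Finset

open scoped Classical

/-- A partition of the player set `Fin n`; following the paper's convention,
`∅` is a member of every partition. -/
def IsPartition {n : ℕ} (P : Finset (Finset (Fin n))) : Prop :=
  ∅ ∈ P ∧ ∀ a : Fin n, ∃! B : Finset (Fin n), B ∈ P ∧ a ∈ B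

/-- The set `𝒫` of all partitions of `Fin n`. -/
noncomputable def allPartitions (n : ℕ) : Finset (Finset (Finset (Fin n))) :=
  Finset.univ.filter IsPartition

/-- `C_i^π`: the set of players appearing after `i` in the ordering `π`. -/
def Cafter {n : ℕ} (π : Equiv.Perm (Fin n)) (i : Fin n) : Finset (Fin n) :=
  Finset.univ.filter fun j => π.symm i < π.symm j

/-- `P_{[S]}` : the partition obtained from `P` by merging all members of `S`
into a single coalition. -/
def pmerge {n : ℕ} (P : Finset (Finset (Fin n))) (S : Finset (Fin n)) :
    Finset (Finset (Fin n)) :=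
  P.image (· \ S) ∪ {S}

/-- `τ_i^T(P)` : the partition obtained from `P` by transferring `i` from its
coalition to the coalition `T` (taking `T = ∅` means that `i` forms a new
singleton coalition). -/
def moveTo {n : ℕ} (P : Finset (Finset (Fin n))) (i : Fin n) (T : Finset (Fin n)) :
    Finset (Finset (Fin n)) :=
  ((P.erase T).image fun B => B.erase i) ∪ {insert i T} ∪ {∅}

/-- A partition-function game: a real value for every (embedded) coalition. -/
abbrev Game (n : ℕ) := Finset (Fin n) → Finset (Finset (Fin n)) → ℝ

/-- A system of weights `α_i(S, P)` (meaningful for `i ∉ S`). -/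
abbrev Weights (n : ℕ) := Fin n → Finset (Fin n) → Finset (Finset (Fin n)) → ℝ

/-- The partition `{N, ∅}` in which the grand coalition is embedded. -/
def grandPart (n : ℕ) : Finset (Finset (Fin n)) := {Finset.univ, ∅}

/-- Normalization: for every embedded coalition `(S, P)` with `i ∈ S`,
`∑_{T ∈ P_{−S}} α_i(S_{−i}, τ_i^T(P)) = 1`. -/
def Normalized {n : ℕ} (w : Weights n) : Prop :=
  ∀ (i : Fin n) (S : Finset (Fin n)) (P : Finset (Finset (Fin n))),
    IsPartition P → S ∈ P → i ∈ S →
      ∑ T ∈ P.erase S, w i (S.erase i) (moveTo P i T) = 1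

/-- Weights take values in `[0, 1]`. -/
def InRange {n : ℕ} (w : Weights n) : Prop :=
  ∀ (i : Fin n) (S : Finset (Fin n)) (P : Finset (Finset (Fin n))),
    i ∉ S → 0 ≤ w i S P ∧ w i S P ≤ 1

/-- `pr^α_π(P) = ∏_{i ∈ N} α_i(C_i^π, P_{[C_i^π]})`. -/
noncomputable def pr {n : ℕ} (w : Weights n) (π : Equiv.Perm (Fin n))
    (P : Finset (Finset (Fin n))) : ℝ :=
  ∏ i : Fin n, w i (Cafter π i) (pmerge P (Cafter π i))

/-- The extended Shapley value `φ^α` (formula (1) of the paper). -/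
noncomputable def esv {n : ℕ} (w : Weights n) (v : Game n) (i : Fin n) : ℝ :=
  ((n.factorial : ℝ))⁻¹ * ∑ π : Equiv.Perm (Fin n), ∑ P ∈ allPartitions n,
    pr w π P *
      (v (insert i (Cafter π i)) (pmerge P (insert i (Cafter π i))) -
        v (Cafter π i) (pmerge P (Cafter π i)))

/-- The `α`-marginal contribution `[mc^α_i(v)](S, P)`. -/
noncomputable def mc {n : ℕ} (w : Weights n) (v : Game n) (i : Fin n)
    (S : Finset (Fin n)) (P : Finset (Finset (Fin n))) : ℝ :=
  ∑ T ∈ P.erase S, w i (S.erase i) (moveTo P i T) * (v S P - v (S.erase i) (moveTo P i T))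

/-- A genuine partition-function game: it vanishes off embedded coalitions
(and on the empty coalition). -/
def IsGame {n : ℕ} (v : Game n) : Prop :=
  ∀ S P, ¬ (IsPartition P ∧ S ∈ P ∧ S ≠ ∅) → v S P = 0

/-- The simple game `e^{(S₀, P₀)}`. -/
noncomputable def sgame {n : ℕ} (S₀ : Finset (Fin n)) (P₀ : Finset (Finset (Fin n))) :
    Game n :=
  fun S P => if S = S₀ ∧ P = P₀ then 1 else 0

/-- The permuted game `π(v)`, with `π(v)(S, P) = v(π(S), π(P))`. -/
def permGame {n : ℕ} (π : Equiv.Perm (Fin n)) (v : Game n) : Game n :=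
  fun S P => v (S.image π) (P.image (Finset.image π))

/-!
Fix an ordering `π`. Along `π` the brackets in `φ^α` telescope: for every partition `P`,
`∑ᵢ [v(Cᵢ ∪ {i}, P_[Cᵢ ∪ {i}]) - v(Cᵢ, P_[Cᵢ])] = v(N, P_[N]) - v(∅, P_[∅]) = v(N, {N, ∅})`,
so efficiency reduces to `∑_P pr^α_π(P) = 1`.

That identity is proved by peeling off the players of `π` from the front. A partition `P`
containing the set `R` of players after `i` is recovered from `Q = P_[R ∪ {i}]` and the
coalition `T ∈ Q ∖ {R ∪ {i}}` that `i` joins, as `P = τ_i^T(Q)`; the factors of the earlier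
players only see `Q`, so summing the factor `α_i(R, τ_i^T(Q))` of `i` over `T` gives `1` by
normalization.
-/

section

variable {n : ℕ} {P : Finset (Finset (Fin n))} {B C R S T : Finset (Fin n)} {a i : Fin n}

theorem IsPartition.eq_of_mem (hP : IsPartition P) (hB : B ∈ P) (hC : C ∈ P) (haB : a ∈ B)
    (haC : a ∈ C) : B = C :=
  (hP.2 a).unique ⟨hB, haB⟩ ⟨hC, haC⟩

theorem IsPartition.notMem_of_ne (hP : IsPartition P) (hB : B ∈ P) (hC : C ∈ P) (hBC : B ≠ C)
    (ha : a ∈ B) : a ∉ C :=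
  fun haC => hBC (hP.eq_of_mem hB hC ha haC)

theorem IsPartition.sdiff_eq_self (hP : IsPartition P) (hB : B ∈ P) (hC : C ∈ P) (hBC : B ≠ C) :
    B \ C = B :=
  sdiff_eq_self_of_disjoint (disjoint_left.2 fun _ => hP.notMem_of_ne hB hC hBC)

theorem mem_allPartitions : P ∈ allPartitions n ↔ IsPartition P := by
  simp [allPartitions]

/-- Junk (`∅`) when `i` lies in no member of `P`. -/
def blockOf (P : Finset (Finset (Fin n))) (i : Fin n) : Finset (Fin n) :=
  univ.filter fun x => ∃ B ∈ P, i ∈ B ∧ x ∈ B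

theorem IsPartition.blockOf_eq (hP : IsPartition P) (hB : B ∈ P) (hi : i ∈ B) :
    blockOf P i = B := by
  ext x
  simp only [blockOf, mem_filter, mem_univ, true_and]
  exact ⟨fun ⟨C, hC, hiC, hxC⟩ => hP.eq_of_mem hC hB hiC hi ▸ hxC, fun hx => ⟨B, hB, hi, hx⟩⟩

theorem IsPartition.blockOf_mem (hP : IsPartition P) (i : Fin n) :
    blockOf P i ∈ P ∧ i ∈ blockOf P i := by
  obtain ⟨B, ⟨hB, hiB⟩, -⟩ := hP.2 i
  rw [hP.blockOf_eq hB hiB]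
  exact ⟨hB, hiB⟩

theorem mem_pmerge : C ∈ pmerge P S ↔ (∃ B ∈ P, B \ S = C) ∨ C = S := by
  simp [pmerge, or_comm]

theorem self_mem_pmerge : S ∈ pmerge P S := by
  simp [pmerge]

theorem IsPartition.isPartition_pmerge (hP : IsPartition P) (S : Finset (Fin n)) :
    IsPartition (pmerge P S) := by
  refine ⟨mem_pmerge.2 (Or.inl ⟨∅, hP.1, empty_sdiff S⟩), fun a => ?_⟩
  by_cases haS : a ∈ S
  · refine ⟨S, ⟨self_mem_pmerge, haS⟩, ?_⟩
    rintro C ⟨hC, haC⟩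
    rcases mem_pmerge.1 hC with ⟨B, -, rfl⟩ | rfl
    · exact absurd haS (mem_sdiff.1 haC).2
    · rfl
  · obtain ⟨hB, haB⟩ := hP.blockOf_mem a
    refine ⟨blockOf P a \ S, ⟨mem_pmerge.2 (Or.inl ⟨_, hB, rfl⟩), mem_sdiff.2 ⟨haB, haS⟩⟩, ?_⟩
    rintro C ⟨hC, haC⟩
    rcases mem_pmerge.1 hC with ⟨B', hB', rfl⟩ | rfl
    · rw [hP.eq_of_mem hB' hB (mem_sdiff.1 haC).1 haB]
    · exact absurd haC haS

theorem IsPartition.pmerge_of_mem (hP : IsPartition P) (hS : S ∈ P) : pmerge P S = P := by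
  ext C
  rw [mem_pmerge]
  constructor
  · rintro (⟨B, hB, rfl⟩ | rfl)
    · obtain rfl | hBS := eq_or_ne B S
      · simpa using hP.1
      · rwa [hP.sdiff_eq_self hB hS hBS]
    · exact hS
  · intro hC
    obtain rfl | hCS := eq_or_ne C S
    · exact Or.inr rfl
    · exact Or.inl ⟨C, hC, hP.sdiff_eq_self hC hS hCS⟩

theorem pmerge_pmerge (h0 : ∅ ∈ P) (hST : S ⊆ T) : pmerge (pmerge P S) T = pmerge P T := by
  have hsdiff (B : Finset (Fin n)) : (B \ S) \ T = B \ T := by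
    rw [sdiff_sdiff_left, sup_eq_right.2 hST]
  ext C
  simp only [mem_pmerge]
  constructor
  · rintro (⟨B, (⟨D, hD, rfl⟩ | rfl), rfl⟩ | rfl)
    · exact Or.inl ⟨D, hD, (hsdiff D).symm⟩
    · exact Or.inl ⟨∅, h0, by simp [sdiff_eq_empty_iff_subset.2 hST]⟩
    · exact Or.inr rfl
  · rintro (⟨B, hB, rfl⟩ | rfl)
    · exact Or.inl ⟨B \ S, Or.inl ⟨B, hB, rfl⟩, hsdiff B⟩
    · exact Or.inr rfl

theorem pmerge_univ (h0 : ∅ ∈ P) : pmerge P univ = grandPart n := by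
  ext C
  simp only [mem_pmerge, grandPart, mem_insert, mem_singleton,
    sdiff_eq_empty_iff_subset.2 (subset_univ _)]
  exact ⟨fun h => h.elim (fun ⟨_, _, h⟩ => Or.inr h.symm) Or.inl,
    fun h => h.elim Or.inr fun h => Or.inl ⟨∅, h0, h.symm⟩⟩

theorem IsPartition.eq_grandPart (hP : IsPartition P) (hu : univ ∈ P) : P = grandPart n := by
  rw [← pmerge_univ hP.1, hP.pmerge_of_mem hu]

theorem isPartition_grandPart : IsPartition (grandPart n) := by
  refine ⟨by simp [grandPart], fun a => ⟨univ, by simp [grandPart], ?_⟩⟩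
  rintro B ⟨hB, haB⟩
  simp only [grandPart, mem_insert, mem_singleton] at hB
  rcases hB with rfl | rfl
  · rfl
  · simp at haB

theorem mem_moveTo :
    C ∈ moveTo P i T ↔ (∃ B ∈ P.erase T, B.erase i = C) ∨ C = insert i T ∨ C = ∅ := by
  simp only [moveTo, mem_union, mem_image, mem_singleton, or_assoc]

theorem IsPartition.isPartition_moveTo (hP : IsPartition P) (hT : T ∈ P) (i : Fin n) :
    IsPartition (moveTo P i T) := by
  refine ⟨mem_moveTo.2 (Or.inr (Or.inr rfl)), fun a => ?_⟩
  by_cases ha : a ∈ insert i T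
  · refine ⟨insert i T, ⟨mem_moveTo.2 (Or.inr (Or.inl rfl)), ha⟩, ?_⟩
    rintro C ⟨hC, haC⟩
    rcases mem_moveTo.1 hC with ⟨B, hB, rfl⟩ | rfl | rfl
    · obtain ⟨hai, haB⟩ := mem_erase.1 haC
      obtain ⟨hBT, hBP⟩ := mem_erase.1 hB
      rcases mem_insert.1 ha with rfl | haT
      · exact absurd rfl hai
      · exact absurd (hP.eq_of_mem hBP hT haB haT) hBT
    · rfl
    · simp at haC
  · rw [mem_insert, not_or] at ha
    obtain ⟨hB, haB⟩ := hP.blockOf_mem a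
    have hBT : blockOf P a ≠ T := fun h => ha.2 (h ▸ haB)
    refine ⟨(blockOf P a).erase i, ⟨mem_moveTo.2 (Or.inl ⟨_, mem_erase.2 ⟨hBT, hB⟩, rfl⟩),
      mem_erase.2 ⟨ha.1, haB⟩⟩, ?_⟩
    rintro C ⟨hC, haC⟩
    rcases mem_moveTo.1 hC with ⟨B', hB', rfl⟩ | rfl | rfl
    · rw [hP.eq_of_mem (mem_of_mem_erase hB') hB (mem_of_mem_erase haC) haB]
    · exact absurd haC (mem_insert.not.2 (not_or.2 ha))
    · simp at haC

theorem IsPartition.pmerge_moveTo (hP : IsPartition P) (hS : S ∈ P) (hiS : i ∈ S)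
    (hT : T ∈ P.erase S) : pmerge (moveTo P i T) S = P := by
  obtain ⟨hTS, hTP⟩ := mem_erase.1 hT
  have hins : insert i T \ S = T := by
    rw [insert_sdiff_of_mem _ hiS, hP.sdiff_eq_self hTP hS hTS]
  ext C
  rw [mem_pmerge]
  constructor
  · rintro (⟨D, hD, rfl⟩ | rfl)
    · rcases mem_moveTo.1 hD with ⟨B, hB, rfl⟩ | rfl | rfl
      · have hBP := mem_of_mem_erase hB
        obtain rfl | hBS := eq_or_ne B S
        · rw [sdiff_eq_empty_iff_subset.2 (erase_subset _ _)]
          exact hP.1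
        · rw [erase_eq_self.2 (hP.notMem_of_ne hS hBP hBS.symm hiS), hP.sdiff_eq_self hBP hS hBS]
          exact hBP
      · rwa [hins]
      · simpa using hP.1
    · exact hS
  · intro hC
    obtain rfl | hCS := eq_or_ne C S
    · exact Or.inr rfl
    obtain rfl | hCT := eq_or_ne C T
    · exact Or.inl ⟨insert i C, mem_moveTo.2 (Or.inr (Or.inl rfl)), hins⟩
    refine Or.inl ⟨C, mem_moveTo.2 (Or.inl ⟨C, mem_erase.2 ⟨hCT, hC⟩, ?_⟩),
      hP.sdiff_eq_self hC hS hCS⟩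
    exact erase_eq_self.2 (hP.notMem_of_ne hS hC hCS.symm hiS)

theorem IsPartition.erase_blockOf_moveTo (hP : IsPartition P) (hS : S ∈ P) (hiS : i ∈ S)
    (hT : T ∈ P.erase S) : (blockOf (moveTo P i T) i).erase i = T := by
  rw [(hP.isPartition_moveTo (mem_of_mem_erase hT) i).blockOf_eq
    (mem_moveTo.2 (Or.inr (Or.inl rfl))) (mem_insert_self i T), erase_insert]
  exact hP.notMem_of_ne hS (mem_of_mem_erase hT) (ne_of_mem_erase hT).symm hiS

theorem IsPartition.blockOf_sdiff_insert (hP : IsPartition P) (hR : R ∈ P) (hiR : i ∉ R) :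
    blockOf P i \ insert i R = (blockOf P i).erase i := by
  obtain ⟨hB, hiB⟩ := hP.blockOf_mem i
  rw [sdiff_insert, hP.sdiff_eq_self hB hR fun h => hiR (h ▸ hiB)]

theorem IsPartition.erase_blockOf_mem (hP : IsPartition P) (hR : R ∈ P) (hiR : i ∉ R) :
    (blockOf P i).erase i ∈ (pmerge P (insert i R)).erase (insert i R) := by
  refine mem_erase.2 ⟨fun h => notMem_erase i _ (h ▸ mem_insert_self i R), ?_⟩
  exact mem_pmerge.2 (Or.inl ⟨_, (hP.blockOf_mem i).1, hP.blockOf_sdiff_insert hR hiR⟩)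

theorem IsPartition.moveTo_pmerge (hP : IsPartition P) (hR : R ∈ P) (hiR : i ∉ R) :
    moveTo (pmerge P (insert i R)) i ((blockOf P i).erase i) = P := by
  obtain ⟨hB, hiB⟩ := hP.blockOf_mem i
  have hsdiff {C : Finset (Fin n)} (hC : C ∈ P) (hCR : C ≠ R) (hiC : i ∉ C) :
      C \ insert i R = C := by
    rw [sdiff_insert_of_notMem hiC, hP.sdiff_eq_self hC hR hCR]
  ext C
  rw [mem_moveTo]
  constructor
  · rintro (⟨D, hD, rfl⟩ | rfl | rfl)
    · obtain ⟨hDT, hD⟩ := mem_erase.1 hD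
      rcases mem_pmerge.1 hD with ⟨E, hE, rfl⟩ | rfl
      · obtain rfl | hEB := eq_or_ne E (blockOf P i)
        · exact absurd (hP.blockOf_sdiff_insert hR hiR) hDT
        obtain rfl | hER := eq_or_ne E R
        · simpa [sdiff_eq_empty_iff_subset.2 (subset_insert i E)] using hP.1
        · have hiE : i ∉ E := hP.notMem_of_ne hB hE hEB.symm hiB
          rwa [hsdiff hE hER hiE, erase_eq_self.2 hiE]
      · rwa [erase_insert hiR]
    · rwa [insert_erase hiB]
    · exact hP.1
  · intro hC
    obtain rfl | hCB := eq_or_ne C (blockOf P i)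
    · exact Or.inr (Or.inl (insert_erase hiB).symm)
    obtain rfl | hCR := eq_or_ne C R
    · refine Or.inl ⟨insert i C, mem_erase.2 ⟨?_, self_mem_pmerge⟩, erase_insert hiR⟩
      exact fun h => notMem_erase i _ (h ▸ mem_insert_self i C)
    obtain rfl | hC0 := eq_or_ne C ∅
    · exact Or.inr (Or.inr rfl)
    have hiC : i ∉ C := hP.notMem_of_ne hB hC hCB.symm hiB
    refine Or.inl ⟨C, mem_erase.2 ⟨?_, mem_pmerge.2 (Or.inl ⟨C, hC, hsdiff hC hCR hiC⟩)⟩,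
      erase_eq_self.2 hiC⟩
    rintro rfl
    obtain ⟨x, hx⟩ := nonempty_iff_ne_empty.2 hC0
    exact hCB (hP.eq_of_mem hC hB hx (mem_of_mem_erase hx))

theorem sum_partitions_mem_eq_sum_sigma_moveTo {M : Type*} [AddCommMonoid M] (hiR : i ∉ R)
    (f : Finset (Finset (Fin n)) → M) :
    ∑ P ∈ (allPartitions n).filter (R ∈ ·), f P =
      ∑ p ∈ ((allPartitions n).filter (insert i R ∈ ·)).sigma (·.erase (insert i R)),
        f (moveTo p.1 i p.2) := by
  have hiS : i ∈ insert i R := mem_insert_self i R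
  refine sum_nbij' (fun P => ⟨pmerge P (insert i R), (blockOf P i).erase i⟩)
    (fun p => moveTo p.1 i p.2) ?_ ?_ ?_ ?_ ?_ <;>
    simp only [mem_sigma, mem_filter, mem_allPartitions, Sigma.forall, and_imp]
  · intro P hP hR
    exact ⟨⟨hP.isPartition_pmerge _, self_mem_pmerge⟩, hP.erase_blockOf_mem hR hiR⟩
  · intro Q T hQ hS hT
    refine ⟨hQ.isPartition_moveTo (mem_of_mem_erase hT) i, mem_moveTo.2 (Or.inl ?_)⟩
    exact ⟨insert i R, mem_erase.2 ⟨(ne_of_mem_erase hT).symm, hS⟩, erase_insert hiR⟩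
  · exact fun P hP hR => hP.moveTo_pmerge hR hiR
  · intro Q T hQ hS hT
    rw [hQ.pmerge_moveTo hS hiS hT, hQ.erase_blockOf_moveTo hS hiS hT]
  · intro P hP hR
    rw [hP.moveTo_pmerge hR hiR]

theorem sum_weight_mul_eq_sum {w : Weights n} (hnorm : Normalized w) (hiR : i ∉ R)
    (g : Finset (Finset (Fin n)) → ℝ)
    (hg : ∀ P, IsPartition P → g (pmerge P (insert i R)) = g P) :
    ∑ P ∈ (allPartitions n).filter (R ∈ ·), w i R P * g P =
      ∑ Q ∈ (allPartitions n).filter (insert i R ∈ ·), g Q := by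
  rw [sum_partitions_mem_eq_sum_sigma_moveTo hiR, sum_sigma]
  refine sum_congr rfl fun Q hQ => ?_
  obtain ⟨hQ, hS⟩ := mem_filter.1 hQ
  rw [mem_allPartitions] at hQ
  have hgT : ∀ T ∈ Q.erase (insert i R), g (moveTo Q i T) = g Q := fun T hT => by
    rw [← hg _ (hQ.isPartition_moveTo (mem_of_mem_erase hT) i),
      hQ.pmerge_moveTo hS (mem_insert_self i R) hT]
  have hsum := hnorm i _ Q hQ hS (mem_insert_self i R)
  rw [erase_insert hiR] at hsum
  rw [sum_congr rfl fun T hT => congrArg _ (hgT T hT), ← sum_mul, hsum, one_mul]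

def playersFrom (π : Equiv.Perm (Fin n)) (k : ℕ) : Finset (Fin n) :=
  univ.filter fun j => k ≤ (π.symm j : ℕ)

section playersFrom

variable (π : Equiv.Perm (Fin n))

theorem playersFrom_zero : playersFrom π 0 = univ := by
  simp [playersFrom]

theorem playersFrom_eq_empty : playersFrom π n = ∅ := by
  simp [playersFrom]

theorem playersFrom_anti {k l : ℕ} (h : k ≤ l) : playersFrom π l ⊆ playersFrom π k :=
  monotone_filter_right _ fun _ _ => h.trans

theorem Cafter_eq_playersFrom (i : Fin n) : Cafter π i = playersFrom π (π.symm i + 1) := by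
  ext j
  simp only [Cafter, playersFrom, mem_filter, mem_univ, true_and, Nat.succ_le_iff]
  rfl

theorem apply_notMem_playersFrom (k : Fin n) : π k ∉ playersFrom π (k + 1) := by
  simp [playersFrom]

theorem insert_playersFrom (k : Fin n) :
    insert (π k) (playersFrom π (k + 1)) = playersFrom π k := by
  ext j
  simp only [playersFrom, mem_insert, mem_filter, mem_univ, true_and, Nat.succ_le_iff]
  rw [← π.symm_apply_eq, Fin.ext_iff]
  omega

end playersFrom

noncomputable def prefixPr (w : Weights n) (π : Equiv.Perm (Fin n)) (k : ℕ)
    (P : Finset (Finset (Fin n))) : ℝ :=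
  ∏ x ∈ univ.filter (fun x => (π.symm x : ℕ) < k), w x (Cafter π x) (pmerge P (Cafter π x))

section prefixPr

variable (w : Weights n) (π : Equiv.Perm (Fin n))

theorem prefixPr_zero (P : Finset (Finset (Fin n))) : prefixPr w π 0 P = 1 := by
  simp [prefixPr]

theorem prefixPr_eq_pr : prefixPr w π n = pr w π := by
  ext P
  simp [prefixPr, pr]

theorem prefixPr_succ {k : ℕ} (hk : k < n) (hP : IsPartition P)
    (hR : playersFrom π (k + 1) ∈ P) :
    prefixPr w π (k + 1) P = w (π ⟨k, hk⟩) (playersFrom π (k + 1)) P * prefixPr w π k P := by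
  have hfilter : univ.filter (fun x => (π.symm x : ℕ) < k + 1) =
      insert (π ⟨k, hk⟩) (univ.filter fun x => (π.symm x : ℕ) < k) := by
    ext x
    simp only [mem_filter, mem_univ, true_and, mem_insert, Nat.lt_succ_iff_lt_or_eq,
      ← π.symm_apply_eq, Fin.ext_iff]
    omega
  rw [prefixPr, hfilter, prod_insert (by simp), Cafter_eq_playersFrom, π.symm_apply_apply,
    hP.pmerge_of_mem hR]
  rfl

theorem prefixPr_pmerge {k : ℕ} (h0 : ∅ ∈ P) :
    prefixPr w π k (pmerge P (playersFrom π k)) = prefixPr w π k P := by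
  refine prod_congr rfl fun x hx => ?_
  rw [Cafter_eq_playersFrom, pmerge_pmerge h0 (playersFrom_anti π ?_)]
  simp only [mem_filter] at hx
  omega

theorem sum_prefixPr_eq_one (hnorm : Normalized w) {k : ℕ} (hk : k ≤ n) :
    ∑ P ∈ (allPartitions n).filter (playersFrom π k ∈ ·), prefixPr w π k P = 1 := by
  induction k with
  | zero =>
    have : (allPartitions n).filter (playersFrom π 0 ∈ ·) = {grandPart n} := by
      ext P
      simp only [mem_filter, mem_allPartitions, mem_singleton, playersFrom_zero]
      refine ⟨fun ⟨hP, hu⟩ => hP.eq_grandPart hu, ?_⟩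
      rintro rfl
      exact ⟨isPartition_grandPart, by simp [grandPart]⟩
    rw [this, sum_singleton, prefixPr_zero]
  | succ k ih =>
    have hins : insert (π ⟨k, hk⟩) (playersFrom π (k + 1)) = playersFrom π k :=
      insert_playersFrom π ⟨k, hk⟩
    have hnotMem : π ⟨k, hk⟩ ∉ playersFrom π (k + 1) := apply_notMem_playersFrom π ⟨k, hk⟩
    calc _ = ∑ P ∈ (allPartitions n).filter (playersFrom π (k + 1) ∈ ·),
          w (π ⟨k, hk⟩) (playersFrom π (k + 1)) P * prefixPr w π k P := by
          refine sum_congr rfl fun P hP => ?_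
          rw [mem_filter, mem_allPartitions] at hP
          exact prefixPr_succ w π hk hP.1 hP.2
      _ = ∑ P ∈ (allPartitions n).filter (playersFrom π k ∈ ·), prefixPr w π k P := by
          rw [sum_weight_mul_eq_sum hnorm hnotMem _ fun P hP => by
            rw [hins, prefixPr_pmerge w π hP.1], hins]
      _ = 1 := ih (Nat.le_of_succ_le hk)

theorem sum_pr_eq_one (hnorm : Normalized w) : ∑ P ∈ allPartitions n, pr w π P = 1 := by
  rw [← prefixPr_eq_pr, ← sum_prefixPr_eq_one w π hnorm le_rfl, playersFrom_eq_empty]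
  congr 1
  exact (filter_true_of_mem fun P hP => (mem_allPartitions.1 hP).1).symm

end prefixPr

theorem sum_sub_Cafter {M : Type*} [AddCommGroup M] (π : Equiv.Perm (Fin n))
    (f : Finset (Fin n) → M) :
    ∑ i, (f (insert i (Cafter π i)) - f (Cafter π i)) = f univ - f ∅ := by
  rw [← Equiv.sum_comp π]
  simp only [Cafter_eq_playersFrom, π.symm_apply_apply, insert_playersFrom]
  rw [Fin.sum_univ_eq_sum_range (fun k => f (playersFrom π k) - f (playersFrom π (k + 1))),
    sum_range_sub', playersFrom_zero, playersFrom_eq_empty]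

theorem sum_sum_pr_mul_marginal_eq (w : Weights n) (hnorm : Normalized w) (v : Game n)
    (hv0 : ∀ P, v ∅ P = 0) (π : Equiv.Perm (Fin n)) :
    ∑ i, ∑ P ∈ allPartitions n, pr w π P *
      (v (insert i (Cafter π i)) (pmerge P (insert i (Cafter π i))) -
        v (Cafter π i) (pmerge P (Cafter π i))) = v univ (grandPart n) := by
  rw [sum_comm]
  calc _ = ∑ P ∈ allPartitions n, pr w π P * v univ (grandPart n) := by
        refine sum_congr rfl fun P hP => ?_
        rw [← mul_sum, sum_sub_Cafter π fun S => v S (pmerge P S),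
          pmerge_univ (mem_allPartitions.1 hP).1, hv0, sub_zero]
    _ = v univ (grandPart n) := by rw [← sum_mul, sum_pr_eq_one w π hnorm, one_mul]

end

theorem stmt4_general (n : ℕ) (w : Weights n) (hnorm : Normalized w)
    (v : Game n) (hv0 : ∀ P, v ∅ P = 0) :
    ∑ i : Fin n, esv w v i = v Finset.univ (grandPart n) := by
  simp only [esv, ← mul_sum]
  rw [sum_comm, sum_congr rfl fun π _ => sum_sum_pr_mul_marginal_eq w hnorm v hv0 π, sum_const,
    card_univ, Fintype.card_perm, Fintype.card_fin, nsmul_eq_mul, inv_mul_cancel_left₀]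
  exact_mod_cast n.factorial_ne_zero

/-- Efficiency of the extended Shapley value `φ^α`. -/
theorem stmt4 (n : ℕ) (w : Weights n) (hr : InRange w) (hnorm : Normalized w)
    (v : Game n) (hv0 : ∀ P, v ∅ P = 0) :
    ∑ i : Fin n, esv w v i = v Finset.univ (grandPart n) :=
  stmt4_general n w hnorm v hv0
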